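/- If Φ : B → A is a right (respectively, left) splitting exact functor between triangulated categories and Ψ : A → B is its right (respectively, left) adjoint, then Ψ is a left (respectively, right) splitting functor. -/

import Mathlib

namespace HPD

open CategoryTheory Limits Pretriangulated

universe v u

variable {C : Type u} [Category.{v} C]

section Preadd
variable [Preadditive C]

/-- The right orthogonal to a set of objects. -/
def rightOrth (A : Set C) : Set C := {T : C | ∀ a ∈ A, ∀ f : a ⟶ T, f = 0}

/-- The left orthogonal to a set of objects. -/
def leftOrth (A : Set C) : Set C := {T : C | ∀ a ∈ A, ∀ f : T ⟶ a, f = 0}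

end Preadd

/-- The inclusion functor of the full subcategory on a set of objects. -/
abbrev incl (A : Set C) : ObjectProperty.FullSubcategory (fun X : C => X ∈ A) ⥤ C :=
  ObjectProperty.ι _

/-- A full subcategory is right admissible if its inclusion functor admits a right adjoint. -/
def RightAdmissible (A : Set C) : Prop := (incl A).IsLeftAdjoint

/-- A full subcategory is left admissible if its inclusion functor admits a left adjoint. -/
def LeftAdmissible (A : Set C) : Prop := (incl A).IsRightAdjoint

/-- A full subcategory is admissible if it is both left and right admissible. -/
def Admissible (A : Set C) : Prop := RightAdmissible A ∧ LeftAdmissible A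

section Triang

variable [HasZeroObject C] [Preadditive C] [HasShift C ℤ]
  [∀ n : ℤ, (shiftFunctor C n).Additive] [Pretriangulated C]

/-- A set of objects is a (strictly full) triangulated subcategory. -/
structure IsTriangulatedSub (A : Set C) : Prop where
  zero : ∀ X : C, IsZero X → X ∈ A
  isoClosed : ∀ ⦃X Y : C⦄, (X ≅ Y) → X ∈ A → Y ∈ A
  shift : ∀ (X : C) (n : ℤ), X ∈ A → X⟦n⟧ ∈ A
  ext₂ : ∀ T : Triangle C, T ∈ (distTriang C) → T.obj₁ ∈ A → T.obj₃ ∈ A → T.obj₂ ∈ A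

/-- The minimal strictly full triangulated subcategory containing a set of objects. -/
def triangulatedClosure (S : Set C) : Set C :=
  {X : C | ∀ A : Set C, IsTriangulatedSub A → S ⊆ A → X ∈ A}

/-- A family is semiorthogonal if there are no nonzero morphisms from objects of a later
subcategory to objects of an earlier one. -/
def IsSemiorthogonal {n : ℕ} (A : Fin n → Set C) : Prop :=
  ∀ ⦃i j : Fin n⦄, j < i → ∀ a ∈ A i, ∀ b ∈ A j, ∀ f : a ⟶ b, f = 0

/-- `IsSODOn S A` : the family `A` is a semiorthogonal decomposition of the (strictly full
triangulated) subcategory with objects `S`; every object of `S` admits a filtration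
`0 = T_n → ... → T_1 → T_0 = T` whose `k`-th cone lies in `A k`. -/
structure IsSODOn {n : ℕ} (S : Set C) (A : Fin n → Set C) : Prop where
  subset : ∀ i, A i ⊆ S
  semiorthogonal : IsSemiorthogonal A
  filtration : ∀ T ∈ S, ∃ (F : Fin (n+1) → C) (f : ∀ k : Fin n, F k.succ ⟶ F k.castSucc),
    F 0 = T ∧ IsZero (F (Fin.last n)) ∧
    ∀ k : Fin n, ∃ (Q : C) (g : F k.castSucc ⟶ Q) (h : Q ⟶ (F k.succ)⟦(1 : ℤ)⟧),
      Q ∈ A k ∧ Triangle.mk (f k) g h ∈ distTriang C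

end Triang

end HPD
namespace HPD
open CategoryTheory Limits Pretriangulated

universe v₂ u₂ v₁ u₁

variable {B : Type u₁} [Category.{v₁} B] {A : Type u₂} [Category.{v₂} A]

/-- The kernel of a functor: the full subcategory of objects sent to zero. -/
def kerSet (Φ : B ⥤ A) : Set B := {X : B | IsZero (Φ.obj X)}

/-- The image of a functor: the objects isomorphic to `Φ X` for some `X`. -/
def imSet (Φ : B ⥤ A) : Set A := {Y : A | ∃ X : B, Nonempty (Φ.obj X ≅ Y)}

section
variable [Preadditive B]

/-- An exact functor `Φ : B → A` is right splitting if `Ker Φ` is right admissible in `B`,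
the restriction of `Φ` to `(Ker Φ)^⊥` is fully faithful, and `Im Φ` is right admissible
in `A`. -/
structure RightSplitting (Φ : B ⥤ A) : Prop where
  ker_radm : RightAdmissible (kerSet Φ)
  full : (incl (rightOrth (kerSet Φ)) ⋙ Φ).Full
  faithful : (incl (rightOrth (kerSet Φ)) ⋙ Φ).Faithful
  im_radm : RightAdmissible (imSet Φ)

/-- An exact functor `Φ : B → A` is left splitting if `Ker Φ` is left admissible in `B`,
the restriction of `Φ` to `^⊥(Ker Φ)` is fully faithful, and `Im Φ` is left admissible
in `A`. -/
structure LeftSplitting (Φ : B ⥤ A) : Prop where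
  ker_ladm : LeftAdmissible (kerSet Φ)
  full : (incl (leftOrth (kerSet Φ)) ⋙ Φ).Full
  faithful : (incl (leftOrth (kerSet Φ)) ⋙ Φ).Faithful
  im_ladm : LeftAdmissible (imSet Φ)

end

end HPD
namespace HPD
open CategoryTheory Limits Pretriangulated

/-!
For a right admissible, shift-closed subcategory `S`, the counit of `S ↪ 𝒯` completes to a
distinguished triangle `a → T → Z → a⟦1⟧` with `a ∈ S` and `Z ∈ S^⊥`. Reading off the long exact
`Hom`-sequences, `T ↦ Z` is a left adjoint to `S^⊥ ↪ 𝒯`, and every object of `^⊥(S^⊥)` is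
isomorphic to an object of `S`.

Let `Φ ⊣ Ψ` with `Φ` right splitting. By adjunction `Ker Ψ = (Im Φ)^⊥`, which is therefore left
admissible. Since `Φ` is fully faithful on `(Ker Φ)^⊥`, the unit `X → ΨΦX` is invertible there,
so `Im Ψ = (Ker Φ)^⊥` is left admissible as well. The triangle of `X` relative to `Ker Φ` becomes
an isomorphism `ΦX ≅ ΦZ` with `Z ∈ (Ker Φ)^⊥`, so the counit `ΦΨY → Y` is invertible on
`Im Φ ⊇ ^⊥((Im Φ)^⊥) = ^⊥(Ker Ψ)`, which makes `Ψ` fully faithful there. The other case is dual.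
-/

section Category

variable {C : Type*} [Category C]

lemma isIso_of_yoneda_map_bijective_of_mem {P : Set C} {X Y : C} (f : X ⟶ Y) (hX : X ∈ P)
    (hY : Y ∈ P) (hf : ∀ T ∈ P, Function.Bijective (fun x : T ⟶ X => x ≫ f)) : IsIso f := by
  obtain ⟨g, hg : g ≫ f = 𝟙 Y⟩ := (hf Y hY).2 (𝟙 Y)
  exact ⟨g, (hf X hX).1 (by simp [hg]), hg⟩

lemma isIso_of_coyoneda_map_bijective_of_mem {P : Set C} {X Y : C} (f : X ⟶ Y) (hX : X ∈ P)
    (hY : Y ∈ P) (hf : ∀ T ∈ P, Function.Bijective (fun x : Y ⟶ T => f ≫ x)) : IsIso f := by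
  obtain ⟨g, hg : f ≫ g = 𝟙 X⟩ := (hf X hX).2 (𝟙 X)
  exact ⟨g, hg, (hf Y hY).1 (by simp [reassoc_of% hg])⟩

lemma fullyFaithful_incl_comp_iff {D : Type*} [Category D] (P : Set C) (F : C ⥤ D) :
    Nonempty (incl P ⋙ F).FullyFaithful ↔
      ∀ X ∈ P, ∀ Y ∈ P, Function.Bijective (F.map : (X ⟶ Y) → _) := by
  rw [Functor.FullyFaithful.nonempty_iff_map_bijective]
  refine ⟨fun h X hX Y hY => ?_,
    fun h X Y => (h _ X.2 _ Y.2).comp InducedCategory.homEquiv.bijective⟩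
  exact (h ⟨X, hX⟩ ⟨Y, hY⟩).comp InducedCategory.homEquiv.symm.bijective

lemma leftAdmissible_of_bijective_precomp {S : Set C} (h : ∀ T : C, ∃ (Z : C) (g : T ⟶ Z),
    Z ∈ S ∧ ∀ k ∈ S, Function.Bijective (fun u : Z ⟶ k => g ≫ u)) : LeftAdmissible S := by
  choose Z g hZ hg using h
  let e (T : C) (k : ObjectProperty.FullSubcategory (· ∈ S)) :
      ((⟨Z T, hZ T⟩ : ObjectProperty.FullSubcategory (· ∈ S)) ⟶ k) ≃ (T ⟶ k.obj) :=
    InducedCategory.homEquiv.trans (Equiv.ofBijective _ (hg T k.obj k.property))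
  exact (Adjunction.adjunctionOfEquivLeft (G := incl S) e
    fun _ _ _ _ _ => (Category.assoc _ _ _).symm).isRightAdjoint

lemma rightAdmissible_of_bijective_postcomp {S : Set C} (h : ∀ T : C, ∃ (W : C) (f : W ⟶ T),
    W ∈ S ∧ ∀ k ∈ S, Function.Bijective (fun u : k ⟶ W => u ≫ f)) : RightAdmissible S := by
  choose W f hW hf using h
  let e (k : ObjectProperty.FullSubcategory (· ∈ S)) (T : C) :
      (k ⟶ ⟨W T, hW T⟩) ≃ (k.obj ⟶ T) :=
    InducedCategory.homEquiv.trans (Equiv.ofBijective _ (hf T k.obj k.property))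
  exact (Adjunction.adjunctionOfEquivRight (F := incl S) (fun k T => (e k T).symm)
    fun _ k T g' g => by
      obtain ⟨g, rfl⟩ := (e k T).surjective g
      rw [Equiv.symm_apply_eq, Equiv.symm_apply_apply]
      simp [e, InducedCategory.homEquiv]).isLeftAdjoint

end Category

section Adjunction

variable {C D : Type*} [Category C] [Category D] {F : C ⥤ D} {G : D ⥤ C}

lemma isIso_unit_app_of_map_bijective (adj : F ⊣ G) {P : Set C} {X : C} (hX : X ∈ P)
    (hGFX : G.obj (F.obj X) ∈ P) (h : ∀ W ∈ P, Function.Bijective (F.map : (W ⟶ X) → _)) :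
    IsIso (adj.unit.app X) := by
  refine isIso_of_yoneda_map_bijective_of_mem _ hX hGFX fun W hW => ?_
  have e : (· ≫ adj.unit.app X) = adj.homEquiv W (F.obj X) ∘ F.map := by
    funext x
    simp [Adjunction.homEquiv_unit]
  exact e ▸ (adj.homEquiv W (F.obj X)).bijective.comp (h W hW)

lemma isIso_counit_app_of_map_bijective (adj : F ⊣ G) {P : Set D} {Y : D} (hY : Y ∈ P)
    (hFGY : F.obj (G.obj Y) ∈ P) (h : ∀ W ∈ P, Function.Bijective (G.map : (Y ⟶ W) → _)) :
    IsIso (adj.counit.app Y) := by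
  refine isIso_of_coyoneda_map_bijective_of_mem _ hFGY hY fun W hW => ?_
  have e : (adj.counit.app Y ≫ ·) = (adj.homEquiv (G.obj Y) W).symm ∘ G.map := by
    funext x
    simp [Adjunction.homEquiv_counit]
  exact e ▸ (adj.homEquiv (G.obj Y) W).symm.bijective.comp (h W hW)

lemma isIso_counit_app_obj (adj : F ⊣ G) (X : C) [IsIso (adj.unit.app X)] :
    IsIso (adj.counit.app (F.obj X)) :=
  isIso_of_hom_comp_eq_id _ (adj.left_triangle_components X)

lemma isIso_unit_app_obj (adj : F ⊣ G) (Y : D) [IsIso (adj.counit.app Y)] :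
    IsIso (adj.unit.app (G.obj Y)) :=
  isIso_of_comp_hom_eq_id _ (adj.right_triangle_components Y)

lemma map_bijective_of_isIso_counit_app (adj : F ⊣ G) {Y : D} [IsIso (adj.counit.app Y)]
    (Y' : D) : Function.Bijective (G.map : (Y ⟶ Y') → _) := by
  have e : (G.map : (Y ⟶ Y') → _) = adj.homEquiv _ Y' ∘ (adj.counit.app Y ≫ ·) := by
    funext u
    simp [Adjunction.homEquiv_unit]
  exact e ▸ (adj.homEquiv _ Y').bijective.comp
    ((isIso_iff_coyoneda_map_bijective (adj.counit.app Y)).1 inferInstance Y')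

lemma map_bijective_of_isIso_unit_app (adj : F ⊣ G) {X : C} [IsIso (adj.unit.app X)]
    (X' : C) : Function.Bijective (F.map : (X' ⟶ X) → _) := by
  have e : (F.map : (X' ⟶ X) → _) = (adj.homEquiv X' _).symm ∘ (· ≫ adj.unit.app X) := by
    funext u
    simp [Adjunction.homEquiv_counit]
  exact e ▸ (adj.homEquiv X' _).symm.bijective.comp
    ((isIso_iff_yoneda_map_bijective (adj.unit.app X)).1 inferInstance X')

section Preadditive

variable [Preadditive C] [Preadditive D] [F.Additive]

lemma eq_zero_of_comp_map_eq_zero (adj : F ⊣ G) {X : C} {Y Y' : D} {f : Y ⟶ Y'}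
    (hf : ∀ m : F.obj X ⟶ Y, m ≫ f = 0 → m = 0) (m : X ⟶ G.obj Y) (hm : m ≫ G.map f = 0) :
    m = 0 := by
  obtain ⟨m, rfl⟩ := (adj.homEquiv X Y).surjective m
  rw [← Adjunction.homEquiv_naturality_right, ← adj.homAddEquiv_apply,
    AddEquiv.map_eq_zero_iff] at hm
  simp [hf m hm]

lemma eq_zero_of_map_comp_eq_zero (adj : F ⊣ G) {X X' : C} {Y : D} {f : X ⟶ X'}
    (hf : ∀ m : X' ⟶ G.obj Y, f ≫ m = 0 → m = 0) (m : F.obj X' ⟶ Y) (hm : F.map f ≫ m = 0) :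
    m = 0 := by
  obtain ⟨m, rfl⟩ := (adj.homEquiv X' Y).symm.surjective m
  rw [← Adjunction.homEquiv_naturality_left_symm, ← adj.homAddEquiv_symm_apply,
    AddEquiv.map_eq_zero_iff] at hm
  simp [hf m hm]

end Preadditive

end Adjunction

section Orthogonal

variable {C D : Type*} [Category C] [Category D] {F : C ⥤ D} {G : D ⥤ C}

lemma mem_rightOrth_of_iso [Preadditive C] {S : Set C} {X Y : C} (e : X ≅ Y)
    (hX : X ∈ rightOrth S) : Y ∈ rightOrth S := fun a ha f => by
  simpa using congrArg (· ≫ e.hom) (hX a ha (f ≫ e.inv))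

lemma mem_leftOrth_of_iso [Preadditive C] {S : Set C} {X Y : C} (e : X ≅ Y)
    (hX : X ∈ leftOrth S) : Y ∈ leftOrth S := fun a ha f => by
  simpa using congrArg (e.inv ≫ ·) (hX a ha (e.hom ≫ f))

lemma mem_rightOrth_imSet_iff [Preadditive D] {Y : D} :
    Y ∈ rightOrth (imSet F) ↔ ∀ X : C, ∀ f : F.obj X ⟶ Y, f = 0 := by
  refine ⟨fun h X => h _ ⟨X, ⟨Iso.refl _⟩⟩, ?_⟩
  rintro h a ⟨X, ⟨e⟩⟩ f
  simpa using congrArg (e.inv ≫ ·) (h X (e.hom ≫ f))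

lemma mem_leftOrth_imSet_iff [Preadditive C] {X : C} :
    X ∈ leftOrth (imSet G) ↔ ∀ Y : D, ∀ f : X ⟶ G.obj Y, f = 0 := by
  refine ⟨fun h Y => h _ ⟨Y, ⟨Iso.refl _⟩⟩, ?_⟩
  rintro h a ⟨Y, ⟨e⟩⟩ f
  simpa using congrArg (· ≫ e.hom) (h Y (f ≫ e.inv))

lemma forall_hom_eq_zero_iff [HasZeroMorphisms C] [HasZeroMorphisms D]
    (adj : F ⊣ G) (X : C) (Y : D) :
    (∀ f : F.obj X ⟶ Y, f = 0) ↔ ∀ g : X ⟶ G.obj Y, g = 0 := by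
  simp only [← subsingleton_iff_forall_eq]
  exact Equiv.subsingleton_congr (adj.homEquiv X Y)

variable [Preadditive C] [Preadditive D]

lemma obj_mem_rightOrth_kerSet (adj : F ⊣ G) (Y : D) : G.obj Y ∈ rightOrth (kerSet F) :=
  fun X hX => (forall_hom_eq_zero_iff adj X Y).1 fun f => hX.eq_of_src f 0

lemma obj_mem_leftOrth_kerSet (adj : F ⊣ G) (X : C) : F.obj X ∈ leftOrth (kerSet G) :=
  fun Y hY => (forall_hom_eq_zero_iff adj X Y).2 fun g => hY.eq_of_tgt g 0

lemma kerSet_eq_rightOrth_imSet (adj : F ⊣ G) : kerSet G = rightOrth (imSet F) := by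
  ext Y
  rw [mem_rightOrth_imSet_iff]
  simp only [forall_hom_eq_zero_iff adj]
  exact ⟨fun h X g => h.eq_of_tgt g 0, fun h => (IsZero.iff_id_eq_zero _).2 (h _ _)⟩

lemma kerSet_eq_leftOrth_imSet (adj : F ⊣ G) : kerSet F = leftOrth (imSet G) := by
  ext X
  rw [mem_leftOrth_imSet_iff]
  simp only [← forall_hom_eq_zero_iff adj]
  exact ⟨fun h Y f => h.eq_of_src f 0, fun h => (IsZero.iff_id_eq_zero _).2 (h _ _)⟩

end Orthogonal

section Triangulated

variable {C : Type*} [Category C] [HasZeroObject C] [Preadditive C] [HasShift C ℤ]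
  [∀ n : ℤ, (shiftFunctor C n).Additive] [Pretriangulated C] {S : Set C}

lemma RightAdmissible.exists_distTriang (hS : RightAdmissible S)
    (hshift : ∀ X ∈ S, ∀ n : ℤ, X⟦n⟧ ∈ S) (T : C) :
    ∃ (a Z : C) (f : a ⟶ T) (g : T ⟶ Z) (h : Z ⟶ a⟦(1 : ℤ)⟧),
      a ∈ S ∧ Z ∈ rightOrth S ∧ Triangle.mk f g h ∈ distTriang C := by
  obtain ⟨R, ⟨adj⟩⟩ := (hS : (incl S).IsLeftAdjoint).exists_rightAdjoint
  obtain ⟨Z, g, h, hT⟩ := distinguished_cocone_triangle (adj.counit.app T)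
  have hε : ∀ b ∈ S, Function.Bijective (fun v : b ⟶ (R.obj T).obj => v ≫ adj.counit.app T) :=
    fun b hb =>
      (adj.homEquiv ⟨b, hb⟩ T).symm.bijective.comp InducedCategory.homEquiv.symm.bijective
  refine ⟨_, Z, _, g, h, (R.obj T).2, fun a ha u => ?_, hT⟩
  -- `u ≫ h` dies under `ε⟦1⟧'`, which is injective on maps out of `a` since `a⟦-1⟧ ∈ S`;
  -- so `u` factors through `g`, hence through `ε ≫ g = 0`.
  have adj₁ : shiftFunctor C (-1 : ℤ) ⊣ shiftFunctor C (1 : ℤ) :=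
    (shiftEquiv C (1 : ℤ)).symm.toAdjunction
  have hu : u ≫ h = 0 := eq_zero_of_comp_map_eq_zero adj₁
    (fun m hm => (hε _ (hshift a ha (-1))).1 (hm.trans zero_comp.symm)) _
    ((Category.assoc _ _ _).trans ((u ≫= comp_distTriang_mor_zero₃₁ _ hT).trans comp_zero))
  obtain ⟨u, rfl⟩ := Triangle.coyoneda_exact₂ _ (rot_of_distTriang _ hT) u hu
  obtain ⟨v, rfl⟩ := (hε a ha).2 u
  exact (Category.assoc _ _ _).trans ((v ≫= comp_distTriang_mor_zero₁₂ _ hT).trans comp_zero)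

lemma LeftAdmissible.exists_distTriang (hS : LeftAdmissible S)
    (hshift : ∀ X ∈ S, ∀ n : ℤ, X⟦n⟧ ∈ S) (T : C) :
    ∃ (W a : C) (f : W ⟶ T) (g : T ⟶ a) (h : a ⟶ W⟦(1 : ℤ)⟧),
      a ∈ S ∧ W ∈ leftOrth S ∧ Triangle.mk f g h ∈ distTriang C := by
  obtain ⟨L, ⟨adj⟩⟩ := (hS : (incl S).IsRightAdjoint).exists_leftAdjoint
  obtain ⟨W, f, h, hT⟩ := distinguished_cocone_triangle₁ (adj.unit.app T)
  have hη : ∀ b ∈ S, Function.Bijective (fun v : (L.obj T).obj ⟶ b => adj.unit.app T ≫ v) :=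
    fun b hb => (adj.homEquiv T ⟨b, hb⟩).bijective.comp InducedCategory.homEquiv.symm.bijective
  refine ⟨W, _, f, _, h, (L.obj T).2, fun a ha u => ?_, hT⟩
  have adj₁ : shiftFunctor C (-1 : ℤ) ⊣ shiftFunctor C (1 : ℤ) :=
    (shiftEquiv C (1 : ℤ)).symm.toAdjunction
  have hηh : (adj.unit.app T)⟦(-1 : ℤ)⟧' ≫
      (Triangle.mk f (adj.unit.app T) h).invRotate.mor₁ = 0 := by
    have : adj.unit.app T ≫ h = 0 := comp_distTriang_mor_zero₂₃ _ hT
    change (adj.unit.app T)⟦(-1 : ℤ)⟧' ≫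
      (-(h⟦(-1 : ℤ)⟧' ≫ (shiftFunctorCompIsoId C (1 : ℤ) (-1) (by simp)).hom.app W)) = 0
    rw [Preadditive.comp_neg, ← Functor.map_comp_assoc, this, Functor.map_zero, zero_comp,
      neg_zero]
  have hu : (Triangle.mk f (adj.unit.app T) h).invRotate.mor₁ ≫ u = 0 :=
    eq_zero_of_map_comp_eq_zero adj₁
      (fun m hm => (hη _ (hshift a ha 1)).1 (hm.trans comp_zero.symm)) _
      ((Category.assoc _ _ _).symm.trans ((hηh =≫ u).trans zero_comp))
  obtain ⟨u, rfl⟩ := Triangle.yoneda_exact₂ _ (inv_rot_of_distTriang _ hT) u hu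
  obtain ⟨v, rfl⟩ := (hη a ha).2 u
  exact (Category.assoc _ _ _).symm.trans ((comp_distTriang_mor_zero₁₂ _ hT =≫ v).trans zero_comp)

lemma leftAdmissible_rightOrth (hS : RightAdmissible S) (hshift : ∀ X ∈ S, ∀ n : ℤ, X⟦n⟧ ∈ S) :
    LeftAdmissible (rightOrth S) := by
  refine leftAdmissible_of_bijective_precomp fun T => ?_
  obtain ⟨a, Z, f, g, h, ha, hZ, hT⟩ := hS.exists_distTriang hshift T
  refine ⟨Z, g, hZ, fun k hk => ⟨?_, fun v => ?_⟩⟩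
  · refine (injective_iff_map_eq_zero (Preadditive.leftComp k g)).2 fun u hu => ?_
    obtain ⟨w, rfl⟩ := Triangle.yoneda_exact₃ _ hT u hu
    exact (congrArg (_ ≫ ·) (hk _ (hshift a ha 1) w)).trans comp_zero
  · obtain ⟨u, hu⟩ := Triangle.yoneda_exact₂ _ hT v (hk a ha _)
    exact ⟨u, hu.symm⟩

lemma rightAdmissible_leftOrth (hS : LeftAdmissible S) (hshift : ∀ X ∈ S, ∀ n : ℤ, X⟦n⟧ ∈ S) :
    RightAdmissible (leftOrth S) := by
  refine rightAdmissible_of_bijective_postcomp fun T => ?_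
  obtain ⟨W, a, f, g, h, ha, hW, hT⟩ := hS.exists_distTriang hshift T
  refine ⟨W, f, hW, fun k hk => ⟨?_, fun v => ?_⟩⟩
  · refine (injective_iff_map_eq_zero (Preadditive.rightComp k f)).2 fun u hu => ?_
    obtain ⟨w, rfl⟩ := Triangle.coyoneda_exact₂ _ (inv_rot_of_distTriang _ hT) u hu
    exact (congrArg (· ≫ _) (hk _ (hshift a ha (-1)) w)).trans zero_comp
  · obtain ⟨u, hu⟩ := Triangle.coyoneda_exact₂ _ hT v (hk a ha _)
    exact ⟨u, hu.symm⟩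

lemma exists_iso_of_mem_leftOrth_rightOrth (hS : RightAdmissible S)
    (hshift : ∀ X ∈ S, ∀ n : ℤ, X⟦n⟧ ∈ S) {Y : C} (hY : Y ∈ leftOrth (rightOrth S)) :
    ∃ a ∈ S, Nonempty (a ≅ Y) := by
  obtain ⟨a, Z, f, g, h, ha, hZ, hT⟩ := hS.exists_distTriang hshift Y
  have hZ₀ : IsZero Z := by
    obtain ⟨w, hw⟩ := Triangle.yoneda_exact₃ _ hT (𝟙 Z) ((Category.comp_id _).trans (hY Z hZ g))
    exact (IsZero.iff_id_eq_zero _).2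
      (hw.trans ((congrArg (_ ≫ ·) (hZ _ (hshift a ha 1) w)).trans comp_zero))
  have : IsIso f := (Triangle.isZero₃_iff_isIso₁ _ hT).1 hZ₀
  exact ⟨a, ha, ⟨asIso f⟩⟩

lemma exists_iso_of_mem_rightOrth_leftOrth (hS : LeftAdmissible S)
    (hshift : ∀ X ∈ S, ∀ n : ℤ, X⟦n⟧ ∈ S) {Y : C} (hY : Y ∈ rightOrth (leftOrth S)) :
    ∃ a ∈ S, Nonempty (Y ≅ a) := by
  obtain ⟨W, a, f, g, h, ha, hW, hT⟩ := hS.exists_distTriang hshift Y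
  have hW₀ : IsZero W := by
    obtain ⟨w, hw⟩ := Triangle.coyoneda_exact₂ _ (inv_rot_of_distTriang _ hT) (𝟙 W)
      ((Category.id_comp _).trans (hY W hW f))
    exact (IsZero.iff_id_eq_zero _).2
      (hw.trans ((congrArg (· ≫ _) (hW _ (hshift a ha (-1)) w)).trans zero_comp))
  have : IsIso g := (Triangle.isZero₁_iff_isIso₂ _ hT).1 hW₀
  exact ⟨a, ha, ⟨asIso g⟩⟩

end Triangulated

section Splitting

variable {B : Type*} [Category B] [Preadditive B] {A : Type*} [Category A] [Preadditive A]
  {Φ : B ⥤ A} {Ψ : A ⥤ B}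

lemma RightSplitting.isIso_unit_app (adj : Φ ⊣ Ψ) (hΦ : RightSplitting Φ) {X : B}
    (hX : X ∈ rightOrth (kerSet Φ)) : IsIso (adj.unit.app X) := by
  have := hΦ.full
  have := hΦ.faithful
  exact isIso_unit_app_of_map_bijective adj hX (obj_mem_rightOrth_kerSet adj _)
    fun W hW => (fullyFaithful_incl_comp_iff _ Φ).1 ⟨.ofFullyFaithful _⟩ W hW X hX

lemma LeftSplitting.isIso_counit_app (adj : Ψ ⊣ Φ) (hΦ : LeftSplitting Φ) {X : B}
    (hX : X ∈ leftOrth (kerSet Φ)) : IsIso (adj.counit.app X) := by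
  have := hΦ.full
  have := hΦ.faithful
  exact isIso_counit_app_of_map_bijective adj hX (obj_mem_leftOrth_kerSet adj _)
    fun W hW => (fullyFaithful_incl_comp_iff _ Φ).1 ⟨.ofFullyFaithful _⟩ X hX W hW

lemma RightSplitting.imSet_eq_rightOrth_kerSet (adj : Φ ⊣ Ψ) (hΦ : RightSplitting Φ) :
    imSet Ψ = rightOrth (kerSet Φ) := by
  ext X
  refine ⟨fun ⟨Y, ⟨e⟩⟩ => mem_rightOrth_of_iso e (obj_mem_rightOrth_kerSet adj Y), fun hX => ?_⟩
  have := hΦ.isIso_unit_app adj hX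
  exact ⟨_, ⟨(asIso (adj.unit.app X)).symm⟩⟩

lemma LeftSplitting.imSet_eq_leftOrth_kerSet (adj : Ψ ⊣ Φ) (hΦ : LeftSplitting Φ) :
    imSet Ψ = leftOrth (kerSet Φ) := by
  ext X
  refine ⟨fun ⟨Y, ⟨e⟩⟩ => mem_leftOrth_of_iso e (obj_mem_leftOrth_kerSet adj Y), fun hX => ?_⟩
  have := hΦ.isIso_counit_app adj hX
  exact ⟨_, ⟨asIso (adj.counit.app X)⟩⟩

end Splitting

section Shift

variable {B : Type*} [Category B] [HasShift B ℤ] {A : Type*} [Category A] [HasShift A ℤ]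
  {Φ : B ⥤ A} [Φ.CommShift ℤ]

lemma shift_mem_kerSet [Preadditive A] [∀ n : ℤ, (shiftFunctor A n).Additive] {X : B}
    (hX : X ∈ kerSet Φ) (n : ℤ) : X⟦n⟧ ∈ kerSet Φ :=
  ((shiftFunctor A n).map_isZero hX).of_iso ((Φ.commShiftIso n).app X)

lemma shift_mem_imSet {Y : A} (hY : Y ∈ imSet Φ) (n : ℤ) : Y⟦n⟧ ∈ imSet Φ := by
  obtain ⟨X, ⟨e⟩⟩ := hY
  exact ⟨X⟦n⟧, ⟨(Φ.commShiftIso n).app X ≪≫ (shiftFunctor A n).mapIso e⟩⟩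

end Shift

section TriangulatedSplitting

variable {B : Type*} [Category B] [HasZeroObject B] [Preadditive B]
  [HasShift B ℤ] [∀ n : ℤ, (shiftFunctor B n).Additive] [Pretriangulated B]
  {A : Type*} [Category A] [HasZeroObject A] [Preadditive A]
  [HasShift A ℤ] [∀ n : ℤ, (shiftFunctor A n).Additive] [Pretriangulated A]
  {Φ : B ⥤ A} [Φ.CommShift ℤ] [Φ.IsTriangulated] {Ψ : A ⥤ B}

lemma exists_mem_rightOrth_kerSet_iso (hK : RightAdmissible (kerSet Φ)) (X : B) :
    ∃ X' ∈ rightOrth (kerSet Φ), Nonempty (Φ.obj X' ≅ Φ.obj X) := by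
  obtain ⟨a, Z, f, g, h, ha, hZ, hT⟩ := hK.exists_distTriang (fun _ => shift_mem_kerSet) X
  have : IsIso (Φ.map g) := (Triangle.isZero₁_iff_isIso₂ _ (Φ.map_distinguished _ hT)).1 ha
  exact ⟨Z, hZ, ⟨(asIso (Φ.map g)).symm⟩⟩

lemma exists_mem_leftOrth_kerSet_iso (hK : LeftAdmissible (kerSet Φ)) (X : B) :
    ∃ X' ∈ leftOrth (kerSet Φ), Nonempty (Φ.obj X' ≅ Φ.obj X) := by
  obtain ⟨W, a, f, g, h, ha, hW, hT⟩ := hK.exists_distTriang (fun _ => shift_mem_kerSet) X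
  have : IsIso (Φ.map f) := (Triangle.isZero₃_iff_isIso₁ _ (Φ.map_distinguished _ hT)).1 ha
  exact ⟨W, hW, ⟨asIso (Φ.map f)⟩⟩

lemma RightSplitting.isIso_counit_app (adj : Φ ⊣ Ψ) (hΦ : RightSplitting Φ) {Y : A}
    (hY : Y ∈ imSet Φ) : IsIso (adj.counit.app Y) := by
  obtain ⟨X, ⟨e⟩⟩ := hY
  obtain ⟨X', hX', ⟨e'⟩⟩ := exists_mem_rightOrth_kerSet_iso hΦ.ker_radm X
  have := hΦ.isIso_unit_app adj hX'
  have := isIso_counit_app_obj adj X'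
  exact (NatTrans.isIso_app_iff_of_iso adj.counit (e' ≪≫ e)).1 this

lemma LeftSplitting.isIso_unit_app (adj : Ψ ⊣ Φ) (hΦ : LeftSplitting Φ) {Y : A}
    (hY : Y ∈ imSet Φ) : IsIso (adj.unit.app Y) := by
  obtain ⟨X, ⟨e⟩⟩ := hY
  obtain ⟨X', hX', ⟨e'⟩⟩ := exists_mem_leftOrth_kerSet_iso hΦ.ker_ladm X
  have := hΦ.isIso_counit_app adj hX'
  have := isIso_unit_app_obj adj X'
  exact (NatTrans.isIso_app_iff_of_iso adj.unit (e' ≪≫ e)).1 this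

theorem RightSplitting.leftSplitting (adj : Φ ⊣ Ψ) (hΦ : RightSplitting Φ) : LeftSplitting Ψ := by
  have hker := kerSet_eq_rightOrth_imSet adj
  obtain ⟨hΨ⟩ : Nonempty (incl (leftOrth (kerSet Ψ)) ⋙ Ψ).FullyFaithful := by
    refine (fullyFaithful_incl_comp_iff _ Ψ).2 fun Y hY Y' _ => ?_
    obtain ⟨a, ⟨X, ⟨e⟩⟩, ⟨e'⟩⟩ :=
      exists_iso_of_mem_leftOrth_rightOrth hΦ.im_radm (fun _ => shift_mem_imSet) (hker ▸ hY)
    have := hΦ.isIso_counit_app adj ⟨X, ⟨e ≪≫ e'⟩⟩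
    exact map_bijective_of_isIso_counit_app adj Y'
  refine ⟨hker ▸ leftAdmissible_rightOrth hΦ.im_radm (fun _ => shift_mem_imSet), hΨ.full,
    hΨ.faithful, ?_⟩
  rw [hΦ.imSet_eq_rightOrth_kerSet adj]
  exact leftAdmissible_rightOrth hΦ.ker_radm fun _ => shift_mem_kerSet

theorem LeftSplitting.rightSplitting (adj : Ψ ⊣ Φ) (hΦ : LeftSplitting Φ) : RightSplitting Ψ := by
  have hker := kerSet_eq_leftOrth_imSet adj
  obtain ⟨hΨ⟩ : Nonempty (incl (rightOrth (kerSet Ψ)) ⋙ Ψ).FullyFaithful := by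
    refine (fullyFaithful_incl_comp_iff _ Ψ).2 fun Y' _ Y hY => ?_
    obtain ⟨a, ⟨X, ⟨e⟩⟩, ⟨e'⟩⟩ :=
      exists_iso_of_mem_rightOrth_leftOrth hΦ.im_ladm (fun _ => shift_mem_imSet) (hker ▸ hY)
    have := hΦ.isIso_unit_app adj ⟨X, ⟨e ≪≫ e'.symm⟩⟩
    exact map_bijective_of_isIso_unit_app adj Y'
  refine ⟨hker ▸ rightAdmissible_leftOrth hΦ.im_ladm (fun _ => shift_mem_imSet), hΨ.full,
    hΨ.faithful, ?_⟩
  rw [hΦ.imSet_eq_leftOrth_kerSet adj]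
  exact rightAdmissible_leftOrth hΦ.ker_ladm fun _ => shift_mem_kerSet

end TriangulatedSplitting

/-- If `Φ` is a right (resp. left) splitting exact functor between triangulated categories
and `Ψ` is its right (resp. left) adjoint, then `Ψ` is a left (resp. right) splitting
functor. -/
theorem statement_12 {B : Type u₁} [Category.{v₁} B] [HasZeroObject B] [Preadditive B]
    [HasShift B ℤ] [∀ n : ℤ, (shiftFunctor B n).Additive] [Pretriangulated B]
    {A : Type u₂} [Category.{v₂} A] [HasZeroObject A] [Preadditive A]
    [HasShift A ℤ] [∀ n : ℤ, (shiftFunctor A n).Additive] [Pretriangulated A]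
    (Φ : B ⥤ A) [Φ.CommShift ℤ] [Φ.IsTriangulated] (Ψ : A ⥤ B) :
    (∀ _ : Φ ⊣ Ψ, RightSplitting Φ → LeftSplitting Ψ) ∧
    (∀ _ : Ψ ⊣ Φ, LeftSplitting Φ → RightSplitting Ψ) :=
  ⟨fun adj hΦ => hΦ.leftSplitting adj, fun adj hΦ => hΦ.rightSplitting adj⟩

end HPD
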